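/- arXiv:2206.07591 — 6 statements merged into one kernel-verified Lean document; each statement's English description precedes it below -/
import Mathlib

section
/- In a pointed forward Θ-metric space, the forward topology T₊ induced from forward balls coincides with the topology induced by the symmetrized distance d̂(x,y) := (d(x,y)+d(y,x))/2. -/
open TopologicalSpace

lemma gen_open_of_basic {X : Type*} (S : Set (Set X)) (s : Set X)
    (h : ∀ y ∈ s, ∃ t ∈ S, y ∈ t ∧ t ⊆ s) :
    (generateFrom S).IsOpen s := by
  have hs : s = ⋃₀ {t | t ∈ S ∧ t ⊆ s} := by
    ext y
    constructor
    · intro hy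
      obtain ⟨t, ht, hyt, hts⟩ := h y hy
      exact ⟨t, ⟨ht, hts⟩, hyt⟩
    · rintro ⟨t, ⟨-, hts⟩, hyt⟩
      exact hts hyt
  rw [hs]
  exact TopologicalSpace.GenerateOpen.sUnion _ fun t ht =>
    TopologicalSpace.GenerateOpen.basic t ht.1

/-- In a pointed forward `Θ`-metric space, the forward topology `T₊` induced from
forward balls coincides with the topology induced by the symmetrized distance
`d̂(x,y) := (d(x,y) + d(y,x))/2`. -/
theorem stmt_2 {X : Type*} (d : X → X → ℝ) (star : X) (Θ : ℝ → ℝ)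
    -- asymmetric metric space axioms
    (hd_nonneg : ∀ x y, 0 ≤ d x y)
    (hd_eq : ∀ x y, d x y = 0 ↔ x = y)
    (hd_tri : ∀ x y z, d x z ≤ d x y + d y z)
    -- Θ : (0,∞) → [1,∞) non-decreasing
    (hΘ_one : ∀ r > (0:ℝ), 1 ≤ Θ r)
    (hΘ_mono : ∀ r s : ℝ, 0 < r → r ≤ s → Θ r ≤ Θ s)
    -- pointed forward Θ-metric space condition
    (hΘ : ∀ r > (0:ℝ), ∀ x y, d star x < r → d star y < r → d x y ≤ Θ r * d y x) :
    TopologicalSpace.generateFrom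
        {s : Set X | ∃ x : X, ∃ r : ℝ, 0 < r ∧ s = {y | d x y < r}} =
      TopologicalSpace.generateFrom
        {s : Set X | ∃ x : X, ∃ r : ℝ, 0 < r ∧ s = {y | (d x y + d y x) / 2 < r}} := by
  have hdself : ∀ x : X, d x x = 0 := fun x => (hd_eq x x).mpr rfl
  apply le_antisymm
  · -- generateFrom (forward) ≤ generateFrom (symm):
    -- every symm ball is open in the forward topology
    apply le_generateFrom
    rintro s ⟨x, r, hr, rfl⟩
    apply gen_open_of_basic
    intro y hy
    simp only [Set.mem_setOf_eq] at hy
    set R : ℝ := d star y + 1 with hR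
    have hR0 : 0 < R := by have := hd_nonneg star y; linarith
    set C : ℝ := Θ R with hC
    have hC1 : 1 ≤ C := hΘ_one R hR0
    set ε : ℝ := 2 * r - d x y - d y x with hε
    have hε0 : 0 < ε := by linarith
    set δ : ℝ := min 1 (ε / (2 * (1 + C))) with hδ
    have hδ0 : 0 < δ := lt_min one_pos (by positivity)
    refine ⟨{z | d y z < δ}, ⟨y, δ, hδ0, rfl⟩, ?_, ?_⟩
    · simp only [Set.mem_setOf_eq, hdself y]; exact hδ0
    · intro z hz
      simp only [Set.mem_setOf_eq] at hz ⊢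
      have hsz : d star z < R := by
        have := hd_tri star y z
        have hδ1 : δ ≤ 1 := min_le_left _ _
        linarith
      have hsy : d star y < R := by linarith
      have hzy : d z y ≤ C * d y z := hΘ R hR0 z y hsz hsy
      have h1 : d x z ≤ d x y + d y z := hd_tri x y z
      have h2 : d z x ≤ d z y + d y x := hd_tri z y x
      have hδ2 : δ ≤ ε / (2 * (1 + C)) := min_le_right _ _
      have hCd : (1 + C) * δ ≤ ε / 2 := by
        rw [le_div_iff₀ (by positivity : (0:ℝ) < 2 * (1 + C))] at hδ2
        linarith
      have hdyz : 0 ≤ d y z := hd_nonneg y z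
      nlinarith [mul_le_mul_of_nonneg_left hz.le (by linarith : (0:ℝ) ≤ 1 + C)]
  · -- every forward ball is open in the symm topology
    apply le_generateFrom
    rintro s ⟨x, r, hr, rfl⟩
    apply gen_open_of_basic
    intro y hy
    simp only [Set.mem_setOf_eq] at hy
    set ρ : ℝ := (r - d x y) / 2 with hρ
    have hρ0 : 0 < ρ := by simp only [hρ]; linarith
    refine ⟨{z | (d y z + d z y) / 2 < ρ}, ⟨y, ρ, hρ0, rfl⟩, ?_, ?_⟩
    · simp only [Set.mem_setOf_eq, hdself y]; norm_num; exact hρ0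
    · intro z hz
      simp only [Set.mem_setOf_eq] at hz ⊢
      have h1 : d x z ≤ d x y + d y z := hd_tri x y z
      have h2 : 0 ≤ d z y := hd_nonneg z y
      have : d y z < 2 * ρ := by linarith
      simp only [hρ] at this
      linarith
end

section
/- In a pointed forward Θ-metric space, if a sequence (xᵢ) converges to x in the forward topology (i.e., d(x,xᵢ) → 0), then also d(xᵢ,x) → 0. -/
open Filter Topology

/-- In a pointed forward `Θ`-metric space, if a sequence `(xᵢ)` converges to `x`
in the forward topology (i.e. `d(x,xᵢ) → 0`), then also `d(xᵢ,x) → 0`. -/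
theorem stmt_3 {X : Type*} (d : X → X → ℝ) (star : X) (Θ : ℝ → ℝ)
    -- asymmetric metric space axioms
    (hd_nonneg : ∀ x y, 0 ≤ d x y)
    (hd_eq : ∀ x y, d x y = 0 ↔ x = y)
    (hd_tri : ∀ x y z, d x z ≤ d x y + d y z)
    -- Θ : (0,∞) → [1,∞) non-decreasing
    (hΘ_one : ∀ r > (0:ℝ), 1 ≤ Θ r)
    (hΘ_mono : ∀ r s : ℝ, 0 < r → r ≤ s → Θ r ≤ Θ s)
    -- pointed forward Θ-metric space condition
    (hΘ : ∀ r > (0:ℝ), ∀ x y, d star x < r → d star y < r → d x y ≤ Θ r * d y x)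
    (x : ℕ → X) (x₀ : X)
    (hconv : Tendsto (fun i => d x₀ (x i)) atTop (nhds 0)) :
    Tendsto (fun i => d (x i) x₀) atTop (nhds 0) := by
  set r : ℝ := d star x₀ + 1 with hr
  have hr0 : 0 < r := by have := hd_nonneg star x₀; linarith
  have hsmall : ∀ᶠ i in atTop, d x₀ (x i) < 1 := by
    have := hconv (Metric.ball_mem_nhds (0:ℝ) one_pos)
    filter_upwards [this] with i hi
    simpa [Real.dist_eq, abs_of_nonneg (hd_nonneg x₀ (x i))] using hi
  have hbound : ∀ᶠ i in atTop, d (x i) x₀ ≤ Θ r * d x₀ (x i) := by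
    filter_upwards [hsmall] with i hi
    have h1 : d star (x i) < r := by
      have := hd_tri star x₀ (x i); linarith
    have h2 : d star x₀ < r := by linarith
    exact hΘ r hr0 (x i) x₀ h1 h2
  have hg : Tendsto (fun i => Θ r * d x₀ (x i)) atTop (nhds 0) := by
    simpa using hconv.const_mul (Θ r)
  exact squeeze_zero' (Filter.Eventually.of_forall fun i => hd_nonneg _ _) hbound hg
end

section
/- Let (X,⋆,d) be a forward complete pointed forward Θ-metric space with forward topology T₊, σ a topology weaker than T₊ under which d is sequentially lower semicontinuous. Then every σ-sequentially compact subset K ⊂ X is forward complete: every forward Cauchy sequence in K converges (in T₊) to a point of K. -/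
open Filter Topology

/-- Every σ-sequentially compact subset of a forward complete pointed forward
Θ-metric space is forward complete. -/
theorem stmt_8 {X : Type*} (d : X → X → ℝ) (star : X) (Θ : ℝ → ℝ)
    (σ : TopologicalSpace X)
    -- asymmetric metric space axioms
    (hd_nonneg : ∀ x y, 0 ≤ d x y)
    (hd_eq : ∀ x y, d x y = 0 ↔ x = y)
    (hd_tri : ∀ x y z, d x z ≤ d x y + d y z)
    -- Θ : (0,∞) → [1,∞) non-decreasing and the pointed forward Θ-condition
    (hΘ_one : ∀ r > (0:ℝ), 1 ≤ Θ r)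
    (hΘ_mono : ∀ r s : ℝ, 0 < r → r ≤ s → Θ r ≤ Θ s)
    (hΘ : ∀ r > (0:ℝ), ∀ x y, d star x < r → d star y < r → d x y ≤ Θ r * d y x)
    -- X is forward complete: every forward Cauchy sequence converges in T₊
    (hcomplete : ∀ u : ℕ → X,
      (∀ ε > (0:ℝ), ∃ N : ℕ, ∀ i j : ℕ, N < i → i ≤ j → d (u i) (u j) < ε) →
      ∃ x : X, Tendsto (fun i => d x (u i)) atTop (nhds 0))
    -- σ is weaker than the forward topology T₊
    (hweak : TopologicalSpace.generateFrom
        {s : Set X | ∃ x : X, ∃ r : ℝ, 0 < r ∧ s = {y | d x y < r}} ≤ σ)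
    -- d is σ-sequentially lower semicontinuous
    (hlsc : ∀ (x y : ℕ → X) (x₀ y₀ : X),
      Filter.Tendsto x atTop (@nhds X σ x₀) → Filter.Tendsto y atTop (@nhds X σ y₀) →
      d x₀ y₀ ≤ Filter.liminf (fun i => d (x i) (y i)) atTop)
    -- K is σ-sequentially compact
    (K : Set X)
    (hK : ∀ u : ℕ → X, (∀ i, u i ∈ K) →
      ∃ x ∈ K, ∃ φ : ℕ → ℕ, StrictMono φ ∧
        Filter.Tendsto (u ∘ φ) atTop (@nhds X σ x)) :
    -- conclusion: K is forward complete
    ∀ u : ℕ → X, (∀ i, u i ∈ K) →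
      (∀ ε > (0:ℝ), ∃ N : ℕ, ∀ i j : ℕ, N < i → i ≤ j → d (u i) (u j) < ε) →
      ∃ x ∈ K, Tendsto (fun i => d x (u i)) atTop (nhds 0) := by
  intro u huK hCauchy
  obtain ⟨x, hxK, φ, hφ, hσ⟩ := hK u huK
  -- Step 1: d (u j) x → 0
  have step1 : ∀ ε > (0:ℝ), ∃ N : ℕ, ∀ j ≥ N, d (u j) x ≤ ε := by
    intro ε hε
    obtain ⟨N, hN⟩ := hCauchy ε hε
    refine ⟨N + 1, fun j hj => ?_⟩
    have hle : d (u j) x ≤ Filter.liminf (fun n => d (u j) ((u ∘ φ) n)) atTop :=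
      hlsc (fun _ => u j) (u ∘ φ) (u j) x tendsto_const_nhds hσ
    refine hle.trans ?_
    refine Filter.liminf_le_of_frequently_le (Filter.Eventually.frequently ?_)
      ⟨0, Filter.eventually_map.2 (Filter.Eventually.of_forall fun n => hd_nonneg _ _)⟩
    filter_upwards [Filter.eventually_ge_atTop j] with n hn
    exact le_of_lt (hN j (φ n) (by omega) (le_trans hn (hφ.le_apply)))
  have h1 : Tendsto (fun j => d (u j) x) atTop (nhds 0) := by
    rw [Metric.tendsto_atTop]
    intro ε hε
    obtain ⟨N, hN⟩ := step1 (ε / 2) (by linarith)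
    refine ⟨N, fun n hn => ?_⟩
    rw [Real.dist_eq, sub_zero, abs_of_nonneg (hd_nonneg _ _)]
    linarith [hN n hn]
  -- Step 2: boundedness
  obtain ⟨N₀, hN₀⟩ := hCauchy 1 one_pos
  obtain ⟨N₁, hN₁⟩ := step1 1 one_pos
  set M := max N₀ N₁ + 1 with hM
  set r := d star (u M) + 2 with hr
  have hrpos : 0 < r := by have := hd_nonneg star (u M); linarith
  have hxr : d star x < r := by
    have h2 := hd_tri star (u M) x
    have h3 : d (u M) x ≤ 1 := hN₁ M (by omega)
    linarith
  have hujr : ∀ j ≥ M, d star (u j) < r := by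
    intro j hj
    rcases eq_or_lt_of_le hj with h | h
    · have := hd_nonneg star (u M); subst h; linarith
    · have h2 := hd_tri star (u M) (u j)
      have h3 : d (u M) (u j) < 1 := hN₀ M j (by omega) hj
      linarith
  refine ⟨x, hxK, ?_⟩
  have hbound : ∀ᶠ j in atTop, d x (u j) ≤ Θ r * d (u j) x := by
    filter_upwards [Filter.eventually_ge_atTop M] with j hj
    exact hΘ r hrpos x (u j) hxr (hujr j hj)
  have htend : Tendsto (fun j => Θ r * d (u j) x) atTop (nhds 0) := by
    simpa using h1.const_mul (Θ r)
  exact squeeze_zero' (Filter.Eventually.of_forall fun j => hd_nonneg x (u j)) hbound htend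
end

section
/- Let (X,d) be a forward complete forward metric space and φ : X → (−∞,∞] a proper, lower semicontinuous function (w.r.t. the forward topology). Then the global slope 𝔩_φ(x) := sup_{y≠x} [φ(x)−φ(y)]₊ / d(x,y) is lower semicontinuous. -/
/-! For a fixed `y`, the quotient `z ↦ [φ z − φ y]₊ / d(z, y)` is lower semicontinuous: its
numerator is, because `φ` is, and its denominator is upper semicontinuous, because
`d(z, y) ≤ d(z, x) + d(x, y) ≤ Θ(r) d(x, z) + d(x, y)` once `z` lies in a forward ball around `x`
inside the `Θ`-ball of radius `r` about the base point. The global slope dominates every such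
quotient and is their supremum when `φ x < ∞`; when `φ x = ∞`, the quotient at any point of the
proper domain is already `∞`, and if `φ ≡ ∞` the slope is constantly `∞`. -/

open Filter Topology MeasureTheory
open scoped ENNReal

/-- The nonnegative part of an extended real, as an extended nonnegative real. -/
noncomputable def erealPosPart (x : EReal) : ℝ≥0∞ :=
  if x = ⊤ then ⊤ else ENNReal.ofReal x.toReal

/-- The forward topology generated by forward balls of an asymmetric metric. -/
def fwdTop {X : Type*} (d : X → X → ℝ) : TopologicalSpace X :=
  TopologicalSpace.generateFrom
    {s : Set X | ∃ x : X, ∃ r : ℝ, 0 < r ∧ s = {y | d x y < r}}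

/-- The global slope `𝔩_φ(x) = sup_{y≠x} [φ(x)−φ(y)]₊/d(x,y)`, with the
convention `𝔩_φ(x) = ∞` outside the proper domain of `φ`. -/
noncomputable def globalSlope {X : Type*} (d : X → X → ℝ) (φ : X → EReal) (x : X) : ℝ≥0∞ :=
  if φ x = ⊤ then ⊤ else
    ⨆ y : X, ⨆ _ : y ≠ x, erealPosPart (φ x - φ y) / ENNReal.ofReal (d x y)

theorem LowerSemicontinuousAt.ennreal_div {α : Type*} [TopologicalSpace α] {f g : α → ℝ≥0∞}
    {x : α} (hf : LowerSemicontinuousAt f x) (hg : UpperSemicontinuousAt g x) (hgx : g x ≠ ⊤) :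
    LowerSemicontinuousAt (fun z => f z / g z) x := by
  intro c hc
  have hfx : f x ≠ 0 := by rintro h; simp [h] at hc
  have : NeZero (f x) := ⟨hfx⟩
  have := nhdsGT_neBot_of_exists_gt ⟨⊤, lt_top_iff_ne_top.2 hgx⟩
  have hdiv : ∀ᶠ p in 𝓝[<] f x ×ˢ 𝓝[>] g x, c < p.1 / p.2 :=
    ((ENNReal.Tendsto.div tendsto_fst (.inl hfx) tendsto_snd (.inl hgx)).eventually
      (lt_mem_nhds hc)).filter_mono (prod_mono nhdsWithin_le_nhds nhdsWithin_le_nhds)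
  obtain ⟨⟨a, b⟩, hab, ha, hb⟩ := (hdiv.and (prod_mem_prod
    (self_mem_nhdsWithin (s := Set.Iio (f x))) (self_mem_nhdsWithin (s := Set.Ioi (g x))))).exists
  filter_upwards [hf a ha, hg b hb] with z hfz hgz
  exact hab.trans_le (ENNReal.div_le_div hfz.le hgz.le)

theorem erealPosPart_eq_toENNReal : erealPosPart = EReal.toENNReal := rfl

theorem LowerSemicontinuousAt.ereal_toENNReal_sub_const {α : Type*} [TopologicalSpace α]
    {f : α → EReal} {x : α} (hf : LowerSemicontinuousAt f x) (q : EReal) :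
    LowerSemicontinuousAt (fun z => (f z - q).toENNReal) x := by
  by_cases hdeg : f x = ⊥ ∨ q = ⊤
  · have : (f x - q).toENNReal = 0 := by
      rcases hdeg with h | h <;> simp [h, EReal.sub_top]
    intro c hc
    simp [this] at hc
  push Not at hdeg
  refine EReal.continuous_toENNReal.continuousAt.comp_lowerSemicontinuousAt
    (hf.add' lowerSemicontinuousAt_const ?_) (fun _ _ => EReal.toENNReal_le_toENNReal)
  exact EReal.continuousAt_add (.inr (by simpa using hdeg.2)) (.inl hdeg.1)

noncomputable def slopeQuotient {X : Type*} (d : X → X → ℝ) (φ : X → EReal) (x y : X) : ℝ≥0∞ :=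
  erealPosPart (φ x - φ y) / ENNReal.ofReal (d x y)

section

variable {X : Type*} {d : X → X → ℝ} {φ : X → EReal}

theorem slopeQuotient_le_globalSlope (x y : X) : slopeQuotient d φ x y ≤ globalSlope d φ x := by
  rcases eq_or_ne y x with rfl | hyx
  -- `φ x - φ x ≤ 0` in `EReal` even for `φ x = ⊤`, so this quotient is `0`
  · simp [slopeQuotient, erealPosPart_eq_toENNReal, EReal.sub_self_le_zero]
  unfold globalSlope
  split_ifs
  · exact le_top
  · exact le_iSup₂_of_le y hyx le_rfl

theorem exists_lt_slopeQuotient {x w : X} (hw : φ w ≠ ⊤) {c : ℝ≥0∞} (hc : c < globalSlope d φ x) :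
    ∃ y, c < slopeQuotient d φ x y := by
  unfold globalSlope at hc
  split_ifs at hc with hx
  · refine ⟨w, hc.trans_le (le_of_eq ?_)⟩
    simp [slopeQuotient, erealPosPart_eq_toENNReal, hx, EReal.top_sub hw,
      ENNReal.top_div_of_ne_top ENNReal.ofReal_ne_top]
  · obtain ⟨y, hy⟩ := lt_iSup_iff.1 hc
    obtain ⟨-, hy⟩ := lt_iSup_iff.1 hy
    exact ⟨y, hy⟩

theorem tendsto_fwdTop_dist (hd_nonneg : ∀ x y, 0 ≤ d x y) {x : X} (hx : d x x = 0) :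
    Tendsto (d x) (@nhds X (fwdTop d) x) (𝓝 0) :=
  letI := fwdTop d
  tendsto_order.2 ⟨fun _ ha => .of_forall fun z => ha.trans_le (hd_nonneg x z),
    fun ε hε => IsOpen.mem_nhds (TopologicalSpace.isOpen_generateFrom_of_mem ⟨x, ε, hε, rfl⟩)
      (by simpa [hx] using hε)⟩

variable [TopologicalSpace X] (star : X) (Θ : ℝ → ℝ)
  (hd_nonneg : ∀ x y, 0 ≤ d x y) (hd_tri : ∀ x y z, d x z ≤ d x y + d y z)
  (hΘ : ∀ r > (0:ℝ), ∀ x y, d star x < r → d star y < r → d x y ≤ Θ r * d y x)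
  (hd_tendsto : ∀ x, Tendsto (d x) (𝓝 x) (𝓝 0))
include hd_nonneg hd_tri hΘ hd_tendsto

theorem upperSemicontinuousAt_dist_left (x y : X) : UpperSemicontinuousAt (fun z => d z y) x := by
  intro r hr
  set R := d star x + 1
  have hR : 0 < R := by linarith [hd_nonneg star x]
  have hrev : ∀ᶠ z in 𝓝 x, d z x ≤ Θ R * d x z := by
    filter_upwards [(hd_tendsto x).eventually (gt_mem_nhds one_pos)] with z hz
    exact hΘ R hR z x (by linarith [hd_tri star x z]) (by linarith)
  have hsmall : ∀ᶠ z in 𝓝 x, Θ R * d x z < r - d x y := by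
    have := (hd_tendsto x).const_mul (Θ R)
    rw [mul_zero] at this
    exact this.eventually (gt_mem_nhds (by linarith))
  filter_upwards [hrev, hsmall] with z h₁ h₂
  linarith [hd_tri z x y]

theorem lowerSemicontinuousAt_slopeQuotient (hφ : LowerSemicontinuous φ) (x y : X) :
    LowerSemicontinuousAt (fun z => slopeQuotient d φ z y) x :=
  (LowerSemicontinuousAt.ereal_toENNReal_sub_const (hφ x) (φ y)).ennreal_div
    (ENNReal.continuous_ofReal.continuousAt.comp_upperSemicontinuousAt
      (upperSemicontinuousAt_dist_left star Θ hd_nonneg hd_tri hΘ hd_tendsto x y)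
      (fun _ _ => ENNReal.ofReal_le_ofReal))
    ENNReal.ofReal_ne_top

theorem lowerSemicontinuous_globalSlope (hφ : LowerSemicontinuous φ) :
    LowerSemicontinuous (globalSlope d φ) := by
  intro x c hc
  by_cases hfin : ∃ w, φ w ≠ ⊤
  · obtain ⟨w, hw⟩ := hfin
    obtain ⟨y, hy⟩ := exists_lt_slopeQuotient hw hc
    filter_upwards [lowerSemicontinuousAt_slopeQuotient star Θ hd_nonneg hd_tri hΘ hd_tendsto hφ
      x y c hy] with z hz
    exact hz.trans_le (slopeQuotient_le_globalSlope z y)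
  · push Not at hfin
    refine .of_forall fun z => ?_
    simpa [globalSlope, hfin z] using hc.trans_le le_top

end

theorem stmt_10_general {X : Type*} (d : X → X → ℝ) (star : X) (Θ : ℝ → ℝ)
    -- asymmetric metric space axioms
    (hd_nonneg : ∀ x y, 0 ≤ d x y)
    (hd_eq : ∀ x y, d x y = 0 ↔ x = y)
    (hd_tri : ∀ x y z, d x z ≤ d x y + d y z)
    -- pointed forward Θ-metric space structure
    (hΘ : ∀ r > (0:ℝ), ∀ x y, d star x < r → d star y < r → d x y ≤ Θ r * d y x)
    -- φ proper, never −∞, lower semicontinuous w.r.t. the forward topology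
    (φ : X → EReal)
    (hlsc : @LowerSemicontinuous X EReal (fwdTop d) _ φ) :
    @LowerSemicontinuous X ℝ≥0∞ (fwdTop d) _ (globalSlope d φ) :=
  letI := fwdTop d
  lowerSemicontinuous_globalSlope star Θ hd_nonneg hd_tri hΘ
    (fun x => tendsto_fwdTop_dist hd_nonneg ((hd_eq x x).2 rfl)) hlsc

/-- If `φ` is proper and lower semicontinuous with respect to the forward
topology, then the global slope `𝔩_φ` is lower semicontinuous. -/
theorem stmt_10 {X : Type*} (d : X → X → ℝ) (star : X) (Θ : ℝ → ℝ)
    -- asymmetric metric space axioms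
    (hd_nonneg : ∀ x y, 0 ≤ d x y)
    (hd_eq : ∀ x y, d x y = 0 ↔ x = y)
    (hd_tri : ∀ x y z, d x z ≤ d x y + d y z)
    -- pointed forward Θ-metric space structure
    (hΘ_one : ∀ r > (0:ℝ), 1 ≤ Θ r)
    (hΘ_mono : ∀ r s : ℝ, 0 < r → r ≤ s → Θ r ≤ Θ s)
    (hΘ : ∀ r > (0:ℝ), ∀ x y, d star x < r → d star y < r → d x y ≤ Θ r * d y x)
    -- forward completeness
    (hcomplete : ∀ u : ℕ → X,
      (∀ ε > (0:ℝ), ∃ N : ℕ, ∀ i j : ℕ, N < i → i ≤ j → d (u i) (u j) < ε) →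
      ∃ x : X, Tendsto (fun i => d x (u i)) atTop (nhds 0))
    -- φ proper, never −∞, lower semicontinuous w.r.t. the forward topology
    (φ : X → EReal) (hproper : ∃ x, φ x ≠ ⊤) (hbot : ∀ x, φ x ≠ ⊥)
    (hlsc : @LowerSemicontinuous X EReal (fwdTop d) _ φ) :
    @LowerSemicontinuous X ℝ≥0∞ (fwdTop d) _ (globalSlope d φ) :=
  stmt_10_general d star Θ hd_nonneg hd_eq hd_tri hΘ φ hlsc
end

section
/- Suppose φ : X → (−∞,∞] satisfies: for all x₀, x₁ in the domain of φ there is a curve γ from x₀ to x₁ such that Φ(τ,x₀;γ(t)) ≤ (1−t)Φ(τ,x₀;x₀) + tΦ(τ,x₀;x₁) − (1/p)(λ + τ^{1−p})t(1−t^{p−1})d^p(x₀,x₁) for all admissible τ and t ∈ [0,1]. Then the local slope admits the global representation |∂φ|(x) = sup_{y≠x} [ (φ(x)−φ(y))/d(x,y) + (λ/p)d^{p−1}(x,y) ]₊ for all x in the domain of φ. In particular, when λ ≥ 0, |∂φ|(x) equals the global slope 𝔩_φ(x) = sup_{y≠x}[φ(x)−φ(y)]₊/d(x,y). -/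
open Filter Topology
open scoped ENNReal

/-- The local (descending) slope `|∂φ|`. -/
noncomputable def localSlope {X : Type*} (d : X → X → ℝ) (φ : X → EReal) (x : X) : ℝ≥0∞ :=
  if φ x = ⊤ then ⊤ else
    Filter.limsup (fun y => erealPosPart (φ x - φ y) / ENNReal.ofReal (d x y))
      (@nhdsWithin X (fwdTop d) x {x}ᶜ)

/-!
Put `s = τ^{1-p}`. With `D = d(x,y)` and `e = d(x, γ t)`, the convexity inequality along a curve
from `x` to `y` reads
`φ x - φ (γ t) ≥ t (φ x - φ y) + (λ/p) t (1 - t^{p-1}) D^p + (s/p) (e^p - t^p D^p)`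
for every `s > λ₋`. The right side is affine in `s`: letting `s → ∞` gives `e ≤ t D`, and letting
`s ↓ λ₋` gives `φ x - φ (γ t) ≥ t D M - (max λ 0 / p) D^p t^p`, where `M` is the `y`-term of the
supremum. Dividing by `e ≤ t D` and letting `t ↓ 0` shows that the local slope is at least `M`.
Conversely, each difference quotient exceeds its `M`-term by at most `(λ₋/p) d(x,y)^{p-1}`, which
vanishes as `y → x`.
-/

open Set

section ForwardTopology

variable {X : Type*} {d : X → X → ℝ}

lemma isOpen_fwdTop_ball (x : X) {r : ℝ} (hr : 0 < r) : IsOpen[fwdTop d] {y | d x y < r} :=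
  TopologicalSpace.isOpen_generateFrom_of_mem ⟨x, r, hr, rfl⟩

lemma exists_ball_subset_of_isOpen_fwdTop (htri : ∀ x y z, d x z ≤ d x y + d y z) {U : Set X}
    (hU : IsOpen[fwdTop d] U) {x : X} (hx : x ∈ U) : ∃ r > 0, {y | d x y < r} ⊆ U := by
  induction hU generalizing x with
  | basic s hs =>
    obtain ⟨z, r, -, rfl⟩ := hs
    refine ⟨r - d z x, sub_pos.2 hx, fun y (hy : d x y < r - d z x) => ?_⟩
    show d z y < r
    linarith [htri z x y]
  | univ => exact ⟨1, one_pos, subset_univ _⟩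
  | inter s t _ _ ihs iht =>
    obtain ⟨r₁, hr₁, hs⟩ := ihs hx.1
    obtain ⟨r₂, hr₂, ht⟩ := iht hx.2
    exact ⟨min r₁ r₂, lt_min hr₁ hr₂, fun y (hy : d x y < min r₁ r₂) =>
      ⟨hs (hy.trans_le (min_le_left _ _)), ht (hy.trans_le (min_le_right _ _))⟩⟩
  | sUnion S _ ih =>
    obtain ⟨s, hs, hxs⟩ := hx
    obtain ⟨r, hr, hsub⟩ := ih s hs hxs
    exact ⟨r, hr, hsub.trans (subset_sUnion_of_mem hs)⟩

lemma hasBasis_nhds_fwdTop (hself : ∀ x, d x x = 0) (htri : ∀ x y z, d x z ≤ d x y + d y z)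
    (x : X) : (@nhds X (fwdTop d) x).HasBasis (0 < ·) fun r => {y | d x y < r} := by
  let := fwdTop d
  refine ⟨fun s => ⟨fun hs => ?_, fun ⟨r, hr, hsub⟩ => ?_⟩⟩
  · obtain ⟨U, hUs, hU, hxU⟩ := mem_nhds_iff.1 hs
    obtain ⟨r, hr, hball⟩ := exists_ball_subset_of_isOpen_fwdTop htri hU hxU
    exact ⟨r, hr, hball.trans hUs⟩
  · exact mem_of_superset ((isOpen_fwdTop_ball x hr).mem_nhds (by simpa [hself] using hr)) hsub

lemma tendsto_nhds_fwdTop_iff (hnonneg : ∀ x y, 0 ≤ d x y) (hself : ∀ x, d x x = 0)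
    (htri : ∀ x y z, d x z ≤ d x y + d y z) {ι : Type*} {l : Filter ι} {u : ι → X} {x : X} :
    Tendsto u l (@nhds X (fwdTop d) x) ↔ Tendsto (fun i => d x (u i)) l (𝓝 0) := by
  rw [(hasBasis_nhds_fwdTop hself htri x).tendsto_right_iff, Metric.tendsto_nhds]
  simp [abs_of_nonneg (hnonneg _ _)]

end ForwardTopology

lemma erealPosPart_coe (r : ℝ) : erealPosPart r = ENNReal.ofReal r := by
  simp [erealPosPart]

lemma erealPosPart_bot : erealPosPart ⊥ = 0 := by
  simp [erealPosPart]

lemma EReal.ne_top_and_toReal_add_le {z : EReal} (hz : z ≠ ⊥) {q r : ℝ} (h : z + q ≤ r) :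
    z ≠ ⊤ ∧ z.toReal + q ≤ r := by
  have hz' : z ≠ ⊤ := by
    rintro rfl
    simp at h
  refine ⟨hz', ?_⟩
  rw [← EReal.coe_toReal hz' hz] at h
  exact_mod_cast h

lemma nonpos_of_forall_lt_add_mul_le {a b c R : ℝ} (h : ∀ s, c < s → a + s * b ≤ R) : b ≤ 0 := by
  by_contra! hb
  have hlarge : Tendsto (fun s => a + s * b) atTop atTop :=
    tendsto_atTop_add_const_left _ _ (tendsto_id.atTop_mul_const hb)
  obtain ⟨s, hs, hR⟩ := ((eventually_gt_atTop c).and (hlarge.eventually_gt_atTop R)).exists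
  exact absurd (h s hs) (not_le.2 hR)

lemma add_mul_le_of_forall_lt_add_mul_le {a b c R : ℝ} (h : ∀ s, c < s → a + s * b ≤ R) :
    a + c * b ≤ R :=
  le_of_tendsto (x := 𝓝[>] c) (by fun_prop : Continuous fun s => a + s * b).continuousWithinAt
    (eventually_nhdsWithin_of_forall h)

lemma rpow_eq_mul_rpow_sub_one {x p : ℝ} (hx : 0 ≤ x) (hp : p ≠ 0) : x ^ p = x * x ^ (p - 1) := by
  rw [← Real.rpow_one_add' hx (by simpa using hp), add_sub_cancel]

lemma erealPosPart_coe_sub_div_le {p lam D a : ℝ} (hp : 0 < p) (hD : 0 < D) {v : EReal}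
    (hv : v ≠ ⊥) :
    erealPosPart (a - v) / ENNReal.ofReal D ≤
      erealPosPart ((a - v) * ((D⁻¹ : ℝ) : EReal) + ((lam / p * D ^ (p - 1) : ℝ) : EReal))
        + ENNReal.ofReal (max (-lam) 0 / p * D ^ (p - 1)) := by
  induction v using EReal.rec with
  | bot => contradiction
  | top => simp [erealPosPart_bot]
  | coe b =>
    have hsum : 0 ≤ (lam + max (-lam) 0) / p * D ^ (p - 1) := by
      have : 0 ≤ lam + max (-lam) 0 := by linarith [le_max_left (-lam) 0]
      positivity
    norm_cast
    rw [erealPosPart_coe, erealPosPart_coe, ← ENNReal.ofReal_div_of_pos hD]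
    refine (ENNReal.ofReal_le_ofReal ?_).trans ENNReal.ofReal_add_le
    rw [div_eq_mul_inv]
    linarith [show (lam + max (-lam) 0) / p * D ^ (p - 1)
      = lam / p * D ^ (p - 1) + max (-lam) 0 / p * D ^ (p - 1) by ring]

section Convexity

variable {X : Type*} {d : X → X → ℝ} {p lam : ℝ} {φ : X → EReal} {Φ : ℝ → X → X → EReal}

lemma convex_ineq_toReal (hp : 1 < p) (hbot : ∀ x, φ x ≠ ⊥)
    (hΦ : ∀ τ x y, Φ τ x y = φ y + ((d x y ^ p / (p * τ ^ (p - 1)) : ℝ) : EReal))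
    {x y z : X} (hxx : d x x = 0) {a b : ℝ} (ha : φ x = a) (hb : φ y = b) {τ t : ℝ} (ht : 0 ≤ t)
    (h : Φ τ x z ≤ ((1 - t : ℝ) : EReal) * Φ τ x x + ((t : ℝ) : EReal) * Φ τ x y
          - ((1 / p * (lam + 1 / τ ^ (p - 1)) * t * (1 - t ^ (p - 1)) * d x y ^ p : ℝ)
            : EReal)) :
    φ z ≠ ⊤ ∧ t * (a - b) + lam / p * t * (1 - t ^ (p - 1)) * d x y ^ p
      + (τ ^ (p - 1))⁻¹ * ((d x z ^ p - t ^ p * d x y ^ p) / p) ≤ a - (φ z).toReal := by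
  rw [hΦ, hΦ, hΦ, hxx, ha, hb, Real.zero_rpow (by linarith)] at h
  norm_cast at h
  obtain ⟨hz, h⟩ := EReal.ne_top_and_toReal_add_le (hbot z) h
  refine ⟨hz, ?_⟩
  rw [rpow_eq_mul_rpow_sub_one (p := p) ht (by linarith)]
  linear_combination h

lemma descent_along_convex_curve (hp : 1 < p) (hnonneg : ∀ x y, 0 ≤ d x y) (hbot : ∀ x, φ x ≠ ⊥)
    (hΦ : ∀ τ x y, Φ τ x y = φ y + ((d x y ^ p / (p * τ ^ (p - 1)) : ℝ) : EReal))
    {x y : X} (hxx : d x x = 0) {a b : ℝ} (ha : φ x = a) (hb : φ y = b) {γ : ℝ → X}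
    (hγ : ∀ τ : ℝ, 0 < τ → max (-lam) 0 * τ ^ (p - 1) < 1 → ∀ t ∈ Icc (0:ℝ) 1,
      Φ τ x (γ t) ≤ ((1 - t : ℝ) : EReal) * Φ τ x x + ((t : ℝ) : EReal) * Φ τ x y
        - ((1 / p * (lam + 1 / τ ^ (p - 1)) * t * (1 - t ^ (p - 1)) * d x y ^ p : ℝ) : EReal))
    {t : ℝ} (ht : t ∈ Icc (0:ℝ) 1) :
    φ (γ t) ≠ ⊤ ∧ d x (γ t) ≤ t * d x y ∧
      t * (a - b + lam / p * d x y ^ p) - max lam 0 / p * d x y ^ p * t ^ p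
        ≤ a - (φ (γ t)).toReal := by
  have hp1 : 0 < p - 1 := by linarith
  have key : ∀ s, max (-lam) 0 < s → φ (γ t) ≠ ⊤ ∧
      t * (a - b) + lam / p * t * (1 - t ^ (p - 1)) * d x y ^ p
        + s * ((d x (γ t) ^ p - t ^ p * d x y ^ p) / p) ≤ a - (φ (γ t)).toReal := by
    intro s hs
    have hs0 : 0 < s := (le_max_right _ _).trans_lt hs
    have hτ : (s ^ (-(p - 1)⁻¹)) ^ (p - 1) = s⁻¹ := by
      rw [← Real.rpow_mul hs0.le, neg_mul, inv_mul_cancel₀ hp1.ne', Real.rpow_neg_one]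
    have hadm : max (-lam) 0 * (s ^ (-(p - 1)⁻¹)) ^ (p - 1) < 1 := by
      rwa [hτ, ← div_eq_mul_inv, div_lt_one hs0]
    simpa only [hτ, inv_inv] using convex_ineq_toReal hp hbot hΦ hxx ha hb ht.1
      (hγ _ (Real.rpow_pos_of_pos hs0 _) hadm t ht)
  have hslope := nonpos_of_forall_lt_add_mul_le fun s hs => (key s hs).2
  have hlimit := add_mul_le_of_forall_lt_add_mul_le fun s hs => (key s hs).2
  refine ⟨(key _ (lt_add_one _)).1, ?_, ?_⟩
  · rw [div_le_iff₀ (by linarith), zero_mul, sub_nonpos, ← Real.mul_rpow ht.1 (hnonneg _ _),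
      Real.rpow_le_rpow_iff (hnonneg _ _) (mul_nonneg ht.1 (hnonneg _ _)) (by linarith)] at hslope
    exact hslope
  · have htp := rpow_eq_mul_rpow_sub_one ht.1 (by linarith : p ≠ 0)
    have hmax : lam + max (-lam) 0 = max lam 0 := by
      rw [← max_add_add_left]; simp [max_comm]
    have hrest : 0 ≤ max (-lam) 0 * (d x (γ t) ^ p / p) := by
      have := hnonneg x (γ t); positivity
    linear_combination
      hlimit + hrest - (lam / p * d x y ^ p) * htp + (t ^ p * d x y ^ p / p) * hmax

lemma ofReal_le_limsup_of_curve (hp : 1 < p) (hnonneg : ∀ x y, 0 ≤ d x y)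
    (hself : ∀ x, d x x = 0) (htri : ∀ x y z, d x z ≤ d x y + d y z) (hbot : ∀ x, φ x ≠ ⊥)
    {x : X} {a : ℝ} (ha : φ x = a) {γ : ℝ → X} {D M C : ℝ} (hD : 0 < D)
    (hest : ∀ t ∈ Ioc (0:ℝ) 1, φ (γ t) ≠ ⊤ ∧ d x (γ t) ≤ t * D ∧
      t * (D * M) - C * t ^ p ≤ a - (φ (γ t)).toReal) :
    ENNReal.ofReal M ≤ limsup (fun y => erealPosPart (φ x - φ y) / ENNReal.ofReal (d x y))
      (@nhdsWithin X (fwdTop d) x {x}ᶜ) := by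
  rcases le_or_gt M 0 with hM | hM
  · rw [ENNReal.ofReal_of_nonpos hM]
    exact zero_le
  set L : ℝ → ℝ := fun t => M - C / D * t ^ (p - 1) with hL_def
  have hL : Tendsto L (𝓝[>] 0) (𝓝 M) := by
    have h0 : Tendsto (fun t : ℝ => t ^ (p - 1)) (𝓝[>] 0) (𝓝 0) := by
      have hp1 : 0 < p - 1 := by linarith
      have h := (Real.continuousAt_rpow_const 0 (p - 1) (Or.inr hp1.le)).tendsto
      rw [Real.zero_rpow hp1.ne'] at h
      exact h.mono_left nhdsWithin_le_nhds
    simpa using tendsto_const_nhds.sub (h0.const_mul (C / D))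
  have hunit : ∀ᶠ t in 𝓝[>] (0:ℝ), t ∈ Ioc 0 1 := Ioc_mem_nhdsGT one_pos
  have hnear : ∀ᶠ t in 𝓝[>] (0:ℝ), t ∈ Ioc 0 1 ∧ 0 < L t :=
    hunit.and (hL.eventually (lt_mem_nhds hM))
  have hgood : ∀ t ∈ Ioc (0:ℝ) 1, 0 < L t → γ t ≠ x ∧
      ENNReal.ofReal (L t) ≤ erealPosPart (φ x - φ (γ t)) / ENNReal.ofReal (d x (γ t)) := by
    intro t ht hLt
    obtain ⟨hne, hclose, hdescent⟩ := hest t ht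
    have htD : 0 < t * D := mul_pos ht.1 hD
    have hdrop : L t * (t * D) ≤ a - (φ (γ t)).toReal := by
      calc L t * (t * D) = t * (D * M) - C * t ^ p := by
            rw [rpow_eq_mul_rpow_sub_one (p := p) ht.1.le (by linarith), hL_def]; field_simp
      _ ≤ _ := hdescent
    have hpos : 0 < a - (φ (γ t)).toReal := lt_of_lt_of_le (by positivity) hdrop
    refine ⟨fun h => by simp [h, ha] at hpos, ?_⟩
    rw [← EReal.coe_toReal hne (hbot _), ha, ← EReal.coe_sub, erealPosPart_coe]
    calc ENNReal.ofReal (L t) ≤ ENNReal.ofReal ((a - (φ (γ t)).toReal) / (t * D)) :=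
          ENNReal.ofReal_le_ofReal ((le_div_iff₀ htD).2 hdrop)
    _ = ENNReal.ofReal (a - (φ (γ t)).toReal) / ENNReal.ofReal (t * D) :=
          ENNReal.ofReal_div_of_pos htD
    _ ≤ _ := ENNReal.div_le_div_left (ENNReal.ofReal_le_ofReal hclose) _
  have htend : Tendsto γ (𝓝[>] 0) (@nhdsWithin X (fwdTop d) x {x}ᶜ) := by
    let := fwdTop d
    refine tendsto_nhdsWithin_iff.2 ⟨(tendsto_nhds_fwdTop_iff hnonneg hself htri).2 ?_,
      hnear.mono fun t ht => (hgood t ht.1 ht.2).1⟩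
    have hlin : Tendsto (fun t : ℝ => t * D) (𝓝[>] 0) (𝓝 0) := by
      simpa using ((continuous_mul_const D).tendsto 0).mono_left nhdsWithin_le_nhds
    exact squeeze_zero' (Eventually.of_forall fun t => hnonneg _ _)
      (hunit.mono fun t ht => (hest t ht).2.1) hlin
  calc ENNReal.ofReal M = limsup (fun t => ENNReal.ofReal (L t)) (𝓝[>] 0) :=
        (ENNReal.tendsto_ofReal hL).limsup_eq.symm
  _ ≤ limsup (fun t => erealPosPart (φ x - φ (γ t)) / ENNReal.ofReal (d x (γ t))) (𝓝[>] 0) :=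
        limsup_le_limsup (hnear.mono fun t ht => (hgood t ht.1 ht.2).2)
  _ ≤ _ := htend.limsup_comp_le_limsup
        (u := fun y => erealPosPart (φ x - φ y) / ENNReal.ofReal (d x y))

lemma tilted_le_limsup_slope (hp : 1 < p) (hnonneg : ∀ x y, 0 ≤ d x y)
    (hd_eq : ∀ x y, d x y = 0 ↔ x = y) (htri : ∀ x y z, d x z ≤ d x y + d y z)
    (hbot : ∀ x, φ x ≠ ⊥)
    (hΦ : ∀ τ x y, Φ τ x y = φ y + ((d x y ^ p / (p * τ ^ (p - 1)) : ℝ) : EReal))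
    (hconv : ∀ x₀ x₁ : X, φ x₀ ≠ ⊤ → φ x₁ ≠ ⊤ → ∃ γ : ℝ → X, γ 0 = x₀ ∧ γ 1 = x₁ ∧
      ∀ τ : ℝ, 0 < τ → max (-lam) 0 * τ ^ (p - 1) < 1 → ∀ t ∈ Set.Icc (0:ℝ) 1,
        Φ τ x₀ (γ t) ≤ ((1 - t : ℝ) : EReal) * Φ τ x₀ x₀ + ((t : ℝ) : EReal) * Φ τ x₀ x₁
          - ((1 / p * (lam + 1 / τ ^ (p - 1)) * t * (1 - t ^ (p - 1)) * d x₀ x₁ ^ p : ℝ)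
            : EReal))
    {x : X} (hx : φ x ≠ ⊤) {y : X} (hy : y ≠ x) :
    erealPosPart ((φ x - φ y) * (((d x y)⁻¹ : ℝ) : EReal)
        + ((lam / p * d x y ^ (p - 1) : ℝ) : EReal))
      ≤ limsup (fun z => erealPosPart (φ x - φ z) / ENNReal.ofReal (d x z))
        (@nhdsWithin X (fwdTop d) x {x}ᶜ) := by
  have hself : ∀ x, d x x = 0 := fun x => (hd_eq x x).2 rfl
  have hD : 0 < d x y := (hnonneg x y).lt_of_ne fun h => hy ((hd_eq x y).1 h.symm).symm
  obtain ⟨a, ha⟩ : ∃ a : ℝ, φ x = a := ⟨_, (EReal.coe_toReal hx (hbot x)).symm⟩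
  by_cases hyt : φ y = ⊤
  · simp [ha, hyt, EReal.bot_mul_coe_of_pos (inv_pos.2 hD), erealPosPart_bot]
  obtain ⟨b, hb⟩ : ∃ b : ℝ, φ y = b := ⟨_, (EReal.coe_toReal hyt (hbot y)).symm⟩
  obtain ⟨γ, -, -, hγ⟩ := hconv x y hx hyt
  have hterm : erealPosPart ((φ x - φ y) * (((d x y)⁻¹ : ℝ) : EReal)
      + ((lam / p * d x y ^ (p - 1) : ℝ) : EReal))
      = ENNReal.ofReal ((a - b) * (d x y)⁻¹ + lam / p * d x y ^ (p - 1)) := by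
    rw [ha, hb, ← erealPosPart_coe]
    norm_cast
  rw [hterm]
  refine ofReal_le_limsup_of_curve hp hnonneg hself htri hbot ha (γ := γ)
    (C := max lam 0 / p * d x y ^ p) hD fun t ht => ?_
  obtain ⟨hne, hclose, hdescent⟩ :=
    descent_along_convex_curve hp hnonneg hbot hΦ (hself x) ha hb hγ ⟨ht.1.le, ht.2⟩
  refine ⟨hne, hclose, le_of_eq_of_le ?_ hdescent⟩
  rw [rpow_eq_mul_rpow_sub_one (hnonneg x y) (by linarith : p ≠ 0)]
  field_simp

lemma limsup_slope_le_iSup_tilted (hp : 1 < p) (hnonneg : ∀ x y, 0 ≤ d x y)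
    (hd_eq : ∀ x y, d x y = 0 ↔ x = y) (htri : ∀ x y z, d x z ≤ d x y + d y z)
    (hbot : ∀ x, φ x ≠ ⊥) {x : X} (hx : φ x ≠ ⊤) :
    limsup (fun y => erealPosPart (φ x - φ y) / ENNReal.ofReal (d x y))
        (@nhdsWithin X (fwdTop d) x {x}ᶜ)
      ≤ ⨆ y : X, ⨆ _ : y ≠ x, erealPosPart ((φ x - φ y) * (((d x y)⁻¹ : ℝ) : EReal)
        + ((lam / p * d x y ^ (p - 1) : ℝ) : EReal)) := by
  let := fwdTop d
  have hself : ∀ x, d x x = 0 := fun x => (hd_eq x x).2 rfl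
  obtain ⟨a, ha⟩ : ∃ a : ℝ, φ x = a := ⟨_, (EReal.coe_toReal hx (hbot x)).symm⟩
  have hsmall : Tendsto (fun y => ENNReal.ofReal (max (-lam) 0 / p * d x y ^ (p - 1)))
      (𝓝[≠] x) (𝓝 0) := by
    have hp1 : 0 < p - 1 := by linarith
    have hd0 : Tendsto (fun y => d x y) (𝓝[≠] x) (𝓝 0) :=
      (tendsto_nhds_fwdTop_iff hnonneg hself htri).1 (tendsto_id.mono_left nhdsWithin_le_nhds)
    simpa [Real.zero_rpow hp1.ne'] using
      ENNReal.tendsto_ofReal ((hd0.rpow_const (Or.inr hp1.le)).const_mul (max (-lam) 0 / p))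
  refine ENNReal.le_of_forall_pos_le_add fun ε hε _ => limsup_le_of_le isCobounded_le_of_bot ?_
  filter_upwards [self_mem_nhdsWithin, hsmall.eventually (gt_mem_nhds (ENNReal.coe_pos.2 hε))]
    with y hy hyε
  have hD : 0 < d x y := (hnonneg x y).lt_of_ne fun h => hy ((hd_eq x y).1 h.symm).symm
  calc erealPosPart (φ x - φ y) / ENNReal.ofReal (d x y)
      ≤ erealPosPart ((φ x - φ y) * (((d x y)⁻¹ : ℝ) : EReal)
          + ((lam / p * d x y ^ (p - 1) : ℝ) : EReal))
        + ENNReal.ofReal (max (-lam) 0 / p * d x y ^ (p - 1)) := by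
        rw [ha]; exact erealPosPart_coe_sub_div_le (by linarith) hD (hbot y)
    _ ≤ _ := add_le_add (le_iSup₂ (f := fun y (_ : y ≠ x) => erealPosPart
        ((φ x - φ y) * (((d x y)⁻¹ : ℝ) : EReal) + ((lam / p * d x y ^ (p - 1) : ℝ) : EReal)))
        y hy) hyε.le

end Convexity

lemma localSlope_le_globalSlope {X : Type*} (d : X → X → ℝ) (φ : X → EReal) (x : X) :
    localSlope d φ x ≤ globalSlope d φ x := by
  let := fwdTop d
  unfold localSlope globalSlope
  split_ifs
  · exact le_rfl
  · exact limsup_le_of_le isCobounded_le_of_bot (eventually_nhdsWithin_of_forall fun y hy =>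
      le_iSup₂ (f := fun y (_ : y ≠ x) => erealPosPart (φ x - φ y) / ENNReal.ofReal (d x y)) y hy)

theorem stmt_15_general {X : Type*} (d : X → X → ℝ)
    -- asymmetric metric space axioms
    (hd_nonneg : ∀ x y, 0 ≤ d x y)
    (hd_eq : ∀ x y, d x y = 0 ↔ x = y)
    (hd_tri : ∀ x y z, d x z ≤ d x y + d y z)
    -- exponent, convexity parameter, and potential (proper, never −∞)
    (p lam : ℝ) (hp : 1 < p)
    (φ : X → EReal) (hbot : ∀ x, φ x ≠ ⊥)
    -- the Moreau–Yosida functional Φ(τ,x;y)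
    (Φ : ℝ → X → X → EReal)
    (hΦ : ∀ τ x y, Φ τ x y = φ y + ((d x y ^ p / (p * τ ^ (p - 1)) : ℝ) : EReal))
    -- the convexity assumption: for x₀,x₁ ∈ 𝔇(φ) there is a curve γ from x₀ to
    -- x₁ along which Φ(τ,x₀;·) is (p, λ+τ^{1−p})-convex, for all
    -- τ ∈ (0, λ₋^{−1/(p−1)}) (i.e. all τ > 0 with λ₋·τ^{p−1} < 1)
    (hconv : ∀ x₀ x₁ : X, φ x₀ ≠ ⊤ → φ x₁ ≠ ⊤ → ∃ γ : ℝ → X, γ 0 = x₀ ∧ γ 1 = x₁ ∧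
      ∀ τ : ℝ, 0 < τ → max (-lam) 0 * τ ^ (p - 1) < 1 → ∀ t ∈ Set.Icc (0:ℝ) 1,
        Φ τ x₀ (γ t) ≤ ((1 - t : ℝ) : EReal) * Φ τ x₀ x₀ + ((t : ℝ) : EReal) * Φ τ x₀ x₁
          - ((1 / p * (lam + 1 / τ ^ (p - 1)) * t * (1 - t ^ (p - 1)) * d x₀ x₁ ^ p : ℝ)
            : EReal)) :
    (∀ x : X, φ x ≠ ⊤ →
      localSlope d φ x = ⨆ y : X, ⨆ _ : y ≠ x,
        erealPosPart ((φ x - φ y) * (((d x y)⁻¹ : ℝ) : EReal)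
          + ((lam / p * d x y ^ (p - 1) : ℝ) : EReal))) ∧
    (0 ≤ lam → ∀ x : X, φ x ≠ ⊤ → localSlope d φ x = globalSlope d φ x) := by
  have hformula : ∀ x : X, φ x ≠ ⊤ → localSlope d φ x = ⨆ y : X, ⨆ _ : y ≠ x,
      erealPosPart ((φ x - φ y) * (((d x y)⁻¹ : ℝ) : EReal)
        + ((lam / p * d x y ^ (p - 1) : ℝ) : EReal)) := fun x hx => by
    rw [localSlope, if_neg hx]
    exact le_antisymm (limsup_slope_le_iSup_tilted hp hd_nonneg hd_eq hd_tri hbot hx)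
      (iSup₂_le fun y hy => tilted_le_limsup_slope hp hd_nonneg hd_eq hd_tri hbot hΦ hconv hx hy)
  refine ⟨hformula, fun hlam x hx => le_antisymm (localSlope_le_globalSlope d φ x) ?_⟩
  rw [globalSlope, if_neg hx, hformula x hx]
  refine iSup₂_mono fun y hy => ?_
  have hD : 0 < d x y := (hd_nonneg x y).lt_of_ne fun h => hy ((hd_eq x y).1 h.symm).symm
  rw [← EReal.coe_toReal hx (hbot x)]
  simpa [max_eq_right (neg_nonpos.2 hlam)] using
    erealPosPart_coe_sub_div_le (lam := lam) (by linarith) hD (hbot y)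

/-- Global formula for the local slope under the `(p,λ)`-convexity assumption on
the Moreau–Yosida functional `Φ`:
`|∂φ|(x) = sup_{y≠x} [(φ(x)−φ(y))/d(x,y) + (λ/p)d^{p−1}(x,y)]₊`,
and when `λ ≥ 0` the local slope equals the global slope. -/
theorem stmt_15 {X : Type*} (d : X → X → ℝ) (star : X) (Θ : ℝ → ℝ)
    -- asymmetric metric space axioms
    (hd_nonneg : ∀ x y, 0 ≤ d x y)
    (hd_eq : ∀ x y, d x y = 0 ↔ x = y)
    (hd_tri : ∀ x y z, d x z ≤ d x y + d y z)
    -- pointed forward Θ-metric space structure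
    (hΘ_one : ∀ r > (0:ℝ), 1 ≤ Θ r)
    (hΘ_mono : ∀ r s : ℝ, 0 < r → r ≤ s → Θ r ≤ Θ s)
    (hΘ : ∀ r > (0:ℝ), ∀ x y, d star x < r → d star y < r → d x y ≤ Θ r * d y x)
    -- forward completeness
    (hcomplete : ∀ u : ℕ → X,
      (∀ ε > (0:ℝ), ∃ N : ℕ, ∀ i j : ℕ, N < i → i ≤ j → d (u i) (u j) < ε) →
      ∃ x : X, Tendsto (fun i => d x (u i)) atTop (nhds 0))
    -- exponent, convexity parameter, and potential (proper, never −∞)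
    (p lam : ℝ) (hp : 1 < p)
    (φ : X → EReal) (hproper : ∃ x, φ x ≠ ⊤) (hbot : ∀ x, φ x ≠ ⊥)
    -- the Moreau–Yosida functional Φ(τ,x;y)
    (Φ : ℝ → X → X → EReal)
    (hΦ : ∀ τ x y, Φ τ x y = φ y + ((d x y ^ p / (p * τ ^ (p - 1)) : ℝ) : EReal))
    -- the convexity assumption: for x₀,x₁ ∈ 𝔇(φ) there is a curve γ from x₀ to
    -- x₁ along which Φ(τ,x₀;·) is (p, λ+τ^{1−p})-convex, for all
    -- τ ∈ (0, λ₋^{−1/(p−1)}) (i.e. all τ > 0 with λ₋·τ^{p−1} < 1)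
    (hconv : ∀ x₀ x₁ : X, φ x₀ ≠ ⊤ → φ x₁ ≠ ⊤ → ∃ γ : ℝ → X, γ 0 = x₀ ∧ γ 1 = x₁ ∧
      ∀ τ : ℝ, 0 < τ → max (-lam) 0 * τ ^ (p - 1) < 1 → ∀ t ∈ Set.Icc (0:ℝ) 1,
        Φ τ x₀ (γ t) ≤ ((1 - t : ℝ) : EReal) * Φ τ x₀ x₀ + ((t : ℝ) : EReal) * Φ τ x₀ x₁
          - ((1 / p * (lam + 1 / τ ^ (p - 1)) * t * (1 - t ^ (p - 1)) * d x₀ x₁ ^ p : ℝ)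
            : EReal)) :
    (∀ x : X, φ x ≠ ⊤ →
      localSlope d φ x = ⨆ y : X, ⨆ _ : y ≠ x,
        erealPosPart ((φ x - φ y) * (((d x y)⁻¹ : ℝ) : EReal)
          + ((lam / p * d x y ^ (p - 1) : ℝ) : EReal))) ∧
    (0 ≤ lam → ∀ x : X, φ x ≠ ⊤ → localSlope d φ x = globalSlope d φ x) :=
  stmt_15_general d hd_nonneg hd_eq hd_tri p lam hp φ hbot Φ hΦ hconv
end

section
/- Let ξ : [0,∞) → X be a p-curve of maximal slope for a (p,λ)-convex potential φ (λ > 0) with respect to the strong upper gradient |∂φ|, with inf_X φ > −∞. Then φ(ξ(t)) − inf_X φ ≤ (φ(ξ(t₀)) − inf_X φ)·exp(−q λ^{q/p}(t − t₀)) for all t ≥ t₀ > 0, where q = p/(p−1). -/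
/-!
Put `v = φ ∘ ξ - inf φ ≥ 0` and `c = q λ^{q/p}`. Almost everywhere `v' ≤ -c v`: where `v > 0`
this is the maximal slope identity `-v' = |∂φ|^q(ξ)` combined with the convexity inequality,
and where `v = 0` the curve sits at a minimum of `φ`, so `v' = 0`. Since `v` is absolutely
continuous, so is `e^{ct} v`, whose derivative `e^{ct} (v' + c v)` is a.e. nonpositive; hence
`e^{ct} v` decreases.
-/

open Filter Topology MeasureTheory Set
open scoped ENNReal

theorem AbsolutelyContinuousOnInterval.congr {X : Type*} [PseudoMetricSpace X] {f g : ℝ → X}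
    {a b : ℝ} (hf : AbsolutelyContinuousOnInterval f a b) (hfg : EqOn f g (uIcc a b)) :
    AbsolutelyContinuousOnInterval g a b := by
  refine Tendsto.congr' ?_ hf
  filter_upwards [mem_inf_of_right (mem_principal_self _)] with E hE
  refine Finset.sum_congr rfl fun i hi ↦ ?_
  rw [hfg (hE.1 i hi).1, hfg (hE.1 i hi).2]

section IndefiniteIntegral

variable {v D : ℝ → ℝ} {a b : ℝ}

theorem absolutelyContinuousOnInterval_of_sub_eq_integral (hab : a ≤ b)
    (hD : IntervalIntegrable D volume a b) (hv : ∀ x ∈ Icc a b, v x - v a = ∫ y in a..x, D y) :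
    AbsolutelyContinuousOnInterval v a b := by
  have hconst : AbsolutelyContinuousOnInterval (fun _ ↦ v a) a b :=
    (LipschitzWith.const (v a)).lipschitzOnWith.absolutelyContinuousOnInterval
  refine ((hD.absolutelyContinuousOnInterval_intervalIntegral left_mem_uIcc).add hconst).congr
    fun x hx ↦ ?_
  rw [uIcc_of_le hab] at hx
  simp [← hv x hx]

theorem ae_hasDerivAt_of_sub_eq_integral (hD : IntervalIntegrable D volume a b)
    (hv : ∀ x ∈ Icc a b, v x - v a = ∫ y in a..x, D y) :
    ∀ᵐ x, x ∈ Ioo a b → HasDerivAt v (D x) x := by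
  filter_upwards [hD.ae_hasDerivAt_integral] with x hx hxab
  have hab : a ≤ b := (hxab.1.trans hxab.2).le
  have hint := (hx (uIcc_of_le hab ▸ Ioo_subset_Icc_self hxab) a left_mem_uIcc).const_add (v a)
  refine hint.congr_of_eventuallyEq ?_
  filter_upwards [Ioo_mem_nhds hxab.1 hxab.2] with y hy
  rw [← hv y (Ioo_subset_Icc_self hy)]
  ring

/-- Grönwall's inequality for a function that is the indefinite integral of `D`. -/
theorem le_mul_exp_of_sub_eq_integral {K : ℝ} (hab : a ≤ b) (hD : IntervalIntegrable D volume a b)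
    (hv : ∀ x ∈ Icc a b, v x - v a = ∫ y in a..x, D y)
    (hle : ∀ᵐ x, x ∈ Ioo a b → D x ≤ K * v x) :
    v b ≤ v a * Real.exp (K * (b - a)) := by
  set E : ℝ → ℝ := fun x ↦ Real.exp (-K * x)
  have hE : AbsolutelyContinuousOnInterval E a b :=
    ContDiffOn.absolutelyContinuousOnInterval (by fun_prop)
  have hparts := hE.integral_deriv_mul_eq_sub
    (absolutelyContinuousOnInterval_of_sub_eq_integral hab hD hv)
  have hnonpos : ∀ᵐ x, x ∈ Ioo a b → deriv E x * v x + E x * deriv v x ≤ 0 := by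
    filter_upwards [ae_hasDerivAt_of_sub_eq_integral hD hv, hle] with x hderiv hDx hx
    have hEx : HasDerivAt E (E x * (-K * 1)) x := ((hasDerivAt_id' x).const_mul (-K)).exp
    rw [hEx.deriv, (hderiv hx).deriv]
    nlinarith [hDx hx, Real.exp_pos (-K * x)]
  have hintegral : ∫ x in a..b, deriv E x * v x + E x * deriv v x ≤ 0 := by
    rw [intervalIntegral.integral_of_le hab]
    refine integral_nonpos_of_ae ?_
    rw [← Measure.restrict_congr_set Ioo_ae_eq_Ioc]
    exact (ae_restrict_iff' measurableSet_Ioo).2 hnonpos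
  calc v b = Real.exp (K * b) * (E b * v b) := by
        simp only [E, ← mul_assoc, ← Real.exp_add]; simp
    _ ≤ Real.exp (K * b) * (E a * v a) :=
        mul_le_mul_of_nonneg_left (by linarith) (Real.exp_pos _).le
    _ = v a * Real.exp (K * (b - a)) := by
        simp only [E, ← mul_assoc, ← Real.exp_add]; ring_nf

end IndefiniteIntegral

theorem stmt_18_general {X : Type*}
    -- exponents and positive convexity parameter
    (p q lam : ℝ) (hp : 1 < p) (hq : q = p / (p - 1)) (hlam : 0 < lam)
    -- potential: never −∞, with finite infimum minf = inf_X φ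
    (φ : X → EReal)
    (minf : ℝ) (hminf : (minf : EReal) = ⨅ x : X, φ x)
    -- the upper gradient |∂φ| along the curve
    (g : X → ℝ≥0∞)
    -- the p-curve of maximal slope ξ on (0,∞); u = φ∘ξ is locally absolutely
    -- continuous with derivative D satisfying −u′ = |∂φ|^q(ξ) a.e.
    (ξ : ℝ → X) (u : ℝ → ℝ)
    (hu : ∀ t : ℝ, 0 < t → (u t : EReal) = φ (ξ t))
    (D : ℝ → ℝ)
    (hDint : ∀ s t : ℝ, 0 < s → s ≤ t → IntervalIntegrable D volume s t)
    (hAC : ∀ s t : ℝ, 0 < s → s ≤ t → u t - u s = ∫ r in s..t, D r)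
    (hms : ∀ᵐ r ∂(volume.restrict (Set.Ioi (0:ℝ))),
      ENNReal.ofReal (-D r) = g (ξ r) ^ q)
    -- the (p,λ)-convexity enters through this inequality:
    -- q·λ^{q/p}·(φ(ξ(r)) − inf_X φ) ≤ |∂φ|^q(ξ(r)) a.e.
    (hkey : ∀ᵐ r ∂(volume.restrict (Set.Ioi (0:ℝ))),
      ENNReal.ofReal (q * lam ^ (q / p) * (u r - minf)) ≤ g (ξ r) ^ q) :
    ∀ t₀ t : ℝ, 0 < t₀ → t₀ ≤ t →
      u t - minf ≤ (u t₀ - minf) * Real.exp (-(q * lam ^ (q / p)) * (t - t₀)) := by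
  intro t₀ t ht₀ ht₀t
  set c := q * lam ^ (q / p)
  have hc : 0 < c :=
    mul_pos (hq ▸ div_pos (by linarith) (by linarith)) (Real.rpow_pos_of_pos hlam _)
  have hmin : ∀ r, 0 < r → minf ≤ u r := fun r hr ↦
    EReal.coe_le_coe_iff.1 (hu r hr ▸ hminf ▸ iInf_le _ _)
  have hprim : ∀ x ∈ Icc t₀ t, u x - minf - (u t₀ - minf) = ∫ r in t₀..x, D r := fun x hx ↦ by
    rw [← hAC t₀ x ht₀ hx.1]; ring
  have hderiv := ae_hasDerivAt_of_sub_eq_integral (hDint t₀ t ht₀ ht₀t) hprim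
  refine le_mul_exp_of_sub_eq_integral ht₀t (hDint t₀ t ht₀ ht₀t) hprim ?_
  filter_upwards [hderiv, ae_restrict_iff' measurableSet_Ioi |>.1 hms,
    ae_restrict_iff' measurableSet_Ioi |>.1 hkey] with x hDx hmsx hkeyx hx
  have hx0 : 0 < x := ht₀.trans hx.1
  rcases (hmin x hx0).lt_or_eq with hpos | hzero
  · have hcmp := ENNReal.ofReal_le_ofReal_iff'.1 (hmsx hx0 ▸ hkeyx hx0)
    have : 0 < c * (u x - minf) := mul_pos hc (by linarith)
    rcases hcmp with h | h <;> linarith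
  · have hlocmin : IsLocalMin (fun y ↦ u y - minf) x := by
      filter_upwards [Ioi_mem_nhds hx0] with y hy
      linarith [hmin y hy]
    rw [hlocmin.hasDerivAt_eq_zero (hDx hx), ← hzero]
    simp

/-- Exponential decay of the potential along a `p`-curve of maximal slope for a
`(p,λ)`-convex potential `φ` (`λ > 0`) with respect to the strong upper gradient
`|∂φ|`, with `inf_X φ > −∞`:
`φ(ξ(t)) − inf_X φ ≤ (φ(ξ(t₀)) − inf_X φ)·exp(−qλ^{q/p}(t−t₀))` for `t ≥ t₀ > 0`. -/
theorem stmt_18 {X : Type*} (d : X → X → ℝ)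
    -- asymmetric metric space axioms
    (hd_nonneg : ∀ x y, 0 ≤ d x y)
    (hd_eq : ∀ x y, d x y = 0 ↔ x = y)
    (hd_tri : ∀ x y z, d x z ≤ d x y + d y z)
    -- exponents and positive convexity parameter
    (p q lam : ℝ) (hp : 1 < p) (hq : q = p / (p - 1)) (hlam : 0 < lam)
    -- potential: never −∞, with finite infimum minf = inf_X φ
    (φ : X → EReal) (hbot : ∀ x, φ x ≠ ⊥)
    (minf : ℝ) (hminf : (minf : EReal) = ⨅ x : X, φ x)
    -- the upper gradient |∂φ| along the curve
    (g : X → ℝ≥0∞)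
    -- the p-curve of maximal slope ξ on (0,∞); u = φ∘ξ is locally absolutely
    -- continuous with derivative D satisfying −u′ = |∂φ|^q(ξ) a.e.
    (ξ : ℝ → X) (u : ℝ → ℝ)
    (hu : ∀ t : ℝ, 0 < t → (u t : EReal) = φ (ξ t))
    (D : ℝ → ℝ)
    (hDint : ∀ s t : ℝ, 0 < s → s ≤ t → IntervalIntegrable D volume s t)
    (hAC : ∀ s t : ℝ, 0 < s → s ≤ t → u t - u s = ∫ r in s..t, D r)
    (hms : ∀ᵐ r ∂(volume.restrict (Set.Ioi (0:ℝ))),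
      ENNReal.ofReal (-D r) = g (ξ r) ^ q)
    -- the (p,λ)-convexity enters through this inequality:
    -- q·λ^{q/p}·(φ(ξ(r)) − inf_X φ) ≤ |∂φ|^q(ξ(r)) a.e.
    (hkey : ∀ᵐ r ∂(volume.restrict (Set.Ioi (0:ℝ))),
      ENNReal.ofReal (q * lam ^ (q / p) * (u r - minf)) ≤ g (ξ r) ^ q) :
    ∀ t₀ t : ℝ, 0 < t₀ → t₀ ≤ t →
      u t - minf ≤ (u t₀ - minf) * Real.exp (-(q * lam ^ (q / p)) * (t - t₀)) :=
  stmt_18_general p q lam hp hq hlam φ minf hminf g ξ u hu D hDint hAC hms hkey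
end
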